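/- There exists a constant c₁ > 0 depending only on n and p (and in particular independent of γ₁ and γ₂) such that for every p-potential F with constants γ₁, γ₂ and induced extra stress S, and for every symmetric matrix B ∈ M^{n×n}, one has Σ_{i,j} S_{ij}(B) B_{ij} ≥ c₁ γ₁ (1 + |B|²)^{(p−2)/2} |B|². -/

import Mathlib

open scoped BigOperators

noncomputable section

/-- Frobenius inner product on `n × n` real matrices (represented as functions). -/
def frobInner {n : ℕ} (A B : Fin n → Fin n → ℝ) : ℝ := ∑ i, ∑ j, A i j * B i j

/-- Frobenius norm. -/
def frobNorm {n : ℕ} (A : Fin n → Fin n → ℝ) : ℝ := Real.sqrt (frobInner A A)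

/-- A symmetric matrix. -/
def IsSymmMat {n : ℕ} (A : Fin n → Fin n → ℝ) : Prop := ∀ i j, A i j = A j i

/-- The induced potential `Φ(B) = F(|B|)`. -/
def inducedPot {n : ℕ} (F : ℝ → ℝ) (B : Fin n → Fin n → ℝ) : ℝ := F (frobNorm B)

/-- The extra stress induced by `F`: `S(B) = F'(|B|) B / |B|` for `B ≠ 0`, `S(0) = 0`. -/
def stress {n : ℕ} (F : ℝ → ℝ) (B : Fin n → Fin n → ℝ) : Fin n → Fin n → ℝ :=
  if B = 0 then 0 else (deriv F (frobNorm B) / frobNorm B) • B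

/-- `F` is a `p`-potential with constants `γ₁, γ₂ > 0`. -/
structure IsPPotential (n : ℕ) (p γ₁ γ₂ : ℝ) (F : ℝ → ℝ) : Prop where
  convex : ConvexOn ℝ (Set.Ici (0 : ℝ)) F
  smooth : ContDiffOn ℝ 2 F (Set.Ici (0 : ℝ))
  nonneg : ∀ x : ℝ, 0 ≤ x → 0 ≤ F x
  zero : F 0 = 0
  deriv_zero : deriv F 0 = 0
  gamma₁_pos : 0 < γ₁
  gamma₂_pos : 0 < γ₂
  lower : ∀ B C : Fin n → Fin n → ℝ, IsSymmMat B → IsSymmMat C →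
    γ₁ * (1 + frobNorm B ^ 2) ^ ((p - 2) / 2) * frobNorm C ^ 2 ≤
      iteratedFDeriv ℝ 2 (inducedPot F) B ![C, C]
  upper : ∀ B C D : Fin n → Fin n → ℝ, IsSymmMat B → IsSymmMat C → IsSymmMat D →
    |iteratedFDeriv ℝ 2 (inducedPot F) B ![C, D]| ≤
      γ₂ * (1 + frobNorm B ^ 2) ^ ((p - 2) / 2) * frobNorm C * frobNorm D

/-! On the ray through a unit symmetric matrix `E` the potential is `Φ(u • E) = F(u)` for `u > 0`,
so the Hessian lower bound in the direction `E` becomes `F''(s) ≥ γ₁ (1 + s²)^((p-2)/2)`.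
Since `S(B) : B = F'(t) t` with `t = |B|`, and `F'(t/2) ≥ 0` by convexity, `F(0) = 0` and `F ≥ 0`,
the mean value theorem on `[t/2, t]` gives `F'(t) ≥ (t/2) γ₁ min(1, 4^(-(p-2)/2)) (1 + t²)^((p-2)/2)`:
on that interval `1 + ξ²` lies between `(1 + t²)/4` and `1 + t²`. -/

open Filter Topology Set

theorem iteratedFDeriv_two_smul_apply_eq_deriv_deriv {E : Type*} [NormedAddCommGroup E]
    [NormedSpace ℝ E] {Φ : E → ℝ} {f : ℝ → ℝ} {v : E} {s : ℝ}
    (hΦ : ContDiffAt ℝ 2 Φ (s • v)) (hf : (fun u : ℝ => Φ (u • v)) =ᶠ[𝓝 s] f) :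
    iteratedFDeriv ℝ 2 Φ (s • v) ![v, v] = deriv (deriv f) s := by
  obtain ⟨U, hΦU, hU, hsU⟩ := eventually_nhds_iff.1 (hΦ.eventually (by simp))
  let g : ℝ →L[ℝ] E := (ContinuousLinearMap.id ℝ ℝ).smulRight v
  have hgU : IsOpen (g ⁻¹' U) := hU.preimage g.continuous
  have hcomp := g.iteratedFDerivWithin_comp_right (fun y hy => (hΦU y hy).contDiffWithinAt)
    hU.uniqueDiffOn hgU.uniqueDiffOn hsU le_rfl
  rw [iteratedFDerivWithin_of_isOpen 2 hU (x := g s) hsU,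
    iteratedFDerivWithin_of_isOpen 2 hgU hsU] at hcomp
  have hfg : Φ ∘ g =ᶠ[𝓝 s] f := hf
  rw [show deriv (deriv f) = iteratedDeriv 2 f by rw [iteratedDeriv_succ, iteratedDeriv_one],
    iteratedDeriv_eq_iteratedFDeriv, ← (hfg.iteratedFDeriv ℝ 2).eq_of_nhds, hcomp]
  simp only [ContinuousMultilinearMap.compContinuousLinearMap_apply]
  congr 1
  ext i
  fin_cases i <;> simp [g]

theorem ConvexOn.deriv_nonneg_of_nonneg {f : ℝ → ℝ} (hf : ConvexOn ℝ (Ici 0) f)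
    (hf_nonneg : ∀ x, 0 ≤ x → 0 ≤ f x) (hf0 : f 0 = 0) {a : ℝ} (ha : 0 < a)
    (hfa : DifferentiableAt ℝ f a) : 0 ≤ deriv f a := by
  have hslope : 0 ≤ slope f 0 a := by
    rw [slope_def_field, hf0, sub_zero, sub_zero]
    exact div_nonneg (hf_nonneg a ha.le) ha.le
  exact hslope.trans (hf.slope_le_deriv self_mem_Ici ha.le ha hfa)

theorem min_one_rpow_neg_mul_rpow_le {x y c a : ℝ} (hx : 0 < x) (hxy : x ≤ y) (hc : 0 < c)
    (hyc : y ≤ c * x) : min 1 (c ^ (-a)) * y ^ a ≤ x ^ a := by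
  have hy : 0 < y := hx.trans_le hxy
  rcases le_total a 0 with ha | ha
  · calc min 1 (c ^ (-a)) * y ^ a ≤ 1 * y ^ a := by gcongr; exact min_le_left _ _
      _ ≤ x ^ a := by rw [one_mul]; exact Real.rpow_le_rpow_of_nonpos hx hxy ha
  · calc min 1 (c ^ (-a)) * y ^ a ≤ c ^ (-a) * y ^ a := by gcongr; exact min_le_right _ _
      _ = (y / c) ^ a := by rw [Real.rpow_neg hc.le, Real.div_rpow hy.le hc.le]; ring
      _ ≤ x ^ a := by gcongr; rwa [div_le_iff₀' hc]

section Frobenius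

variable {n : ℕ}

theorem frobInner_self_nonneg (A : Fin n → Fin n → ℝ) : 0 ≤ frobInner A A :=
  Finset.sum_nonneg fun _ _ => Finset.sum_nonneg fun _ _ => mul_self_nonneg _

theorem sq_frobNorm (A : Fin n → Fin n → ℝ) : frobNorm A ^ 2 = frobInner A A :=
  Real.sq_sqrt (frobInner_self_nonneg A)

@[simp]
theorem frobNorm_zero : frobNorm (0 : Fin n → Fin n → ℝ) = 0 := by
  simp [frobNorm, frobInner]

theorem frobInner_smul_left (c : ℝ) (A B : Fin n → Fin n → ℝ) :
    frobInner (c • A) B = c * frobInner A B := by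
  simp only [frobInner, Pi.smul_apply, smul_eq_mul, Finset.mul_sum, mul_assoc]

theorem frobNorm_smul {c : ℝ} (hc : 0 ≤ c) (A : Fin n → Fin n → ℝ) :
    frobNorm (c • A) = c * frobNorm A := by
  have hA : frobInner (c • A) (c • A) = c ^ 2 * frobInner A A := by
    simp only [frobInner, Pi.smul_apply, smul_eq_mul, Finset.mul_sum]
    ring_nf
  rw [frobNorm, hA, Real.sqrt_mul (sq_nonneg c), Real.sqrt_sq hc, frobNorm]

theorem frobInner_self_pos {A : Fin n → Fin n → ℝ} (hA : A ≠ 0) : 0 < frobInner A A := by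
  refine (frobInner_self_nonneg A).lt_of_ne fun h => hA ?_
  have hrow := (Finset.sum_eq_zero_iff_of_nonneg fun i _ =>
    Finset.sum_nonneg fun j _ => mul_self_nonneg (A i j)).1 h.symm
  funext i j
  have hij := (Finset.sum_eq_zero_iff_of_nonneg fun j _ => mul_self_nonneg (A i j)).1
    (hrow i (Finset.mem_univ i)) j (Finset.mem_univ j)
  exact mul_self_eq_zero.1 hij

theorem frobNorm_pos {A : Fin n → Fin n → ℝ} (hA : A ≠ 0) : 0 < frobNorm A :=
  Real.sqrt_pos.2 (frobInner_self_pos hA)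

theorem contDiffAt_frobNorm {k : WithTop ℕ∞} {A : Fin n → Fin n → ℝ} (hA : A ≠ 0) :
    ContDiffAt ℝ k frobNorm A := by
  have hQ : ContDiff ℝ k fun A : Fin n → Fin n → ℝ => frobInner A A := by
    unfold frobInner; fun_prop
  exact (Real.contDiffAt_sqrt (frobInner_self_pos hA).ne').comp (f := fun A => frobInner A A) A
    hQ.contDiffAt

theorem frobInner_stress_self (F : ℝ → ℝ) (B : Fin n → Fin n → ℝ) :
    frobInner (stress F B) B = deriv F (frobNorm B) * frobNorm B := by
  rcases eq_or_ne B 0 with rfl | hB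
  · simp [stress, frobInner]
  rw [stress, if_neg hB, frobInner_smul_left, ← sq_frobNorm]
  field_simp [(frobNorm_pos hB).ne']

end Frobenius

namespace IsPPotential

variable {n : ℕ} {p γ₁ γ₂ : ℝ} {F : ℝ → ℝ}

theorem contDiffOn_deriv (hF : IsPPotential n p γ₁ γ₂ F) : ContDiffOn ℝ 1 (deriv F) (Ioi 0) :=
  (hF.smooth.mono Ioi_subset_Ici_self).deriv_of_isOpen isOpen_Ioi (by norm_num)

theorem deriv_nonneg (hF : IsPPotential n p γ₁ γ₂ F) {a : ℝ} (ha : 0 < a) : 0 ≤ deriv F a :=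
  hF.convex.deriv_nonneg_of_nonneg hF.nonneg hF.zero ha
    ((hF.smooth.contDiffAt (Ici_mem_nhds ha)).differentiableAt (by norm_num))

theorem le_deriv_deriv (hF : IsPPotential n p γ₁ γ₂ F) {E : Fin n → Fin n → ℝ}
    (hE : IsSymmMat E) (hE1 : frobNorm E = 1) {s : ℝ} (hs : 0 < s) :
    γ₁ * (1 + s ^ 2) ^ ((p - 2) / 2) ≤ deriv (deriv F) s := by
  have hnorm : ∀ u, 0 ≤ u → frobNorm (u • E) = u := fun u hu => by
    rw [frobNorm_smul hu, hE1, mul_one]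
  have hsE : s • E ≠ 0 := fun h => hs.ne' (by rw [← hnorm s hs.le, h, frobNorm_zero])
  have hΦ : ContDiffAt ℝ 2 (inducedPot F) (s • E) := by
    refine ContDiffAt.comp (g := F) (s • E) ?_ (contDiffAt_frobNorm hsE)
    rw [hnorm s hs.le]
    exact hF.smooth.contDiffAt (Ici_mem_nhds hs)
  have hray : (fun u : ℝ => inducedPot F (u • E)) =ᶠ[𝓝 s] F := by
    filter_upwards [Ioi_mem_nhds hs] with u hu
    rw [inducedPot, hnorm u (le_of_lt hu)]
  have hsymm : IsSymmMat (s • E) := fun i j => by simp only [Pi.smul_apply, hE i j]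
  have hlower := hF.lower (s • E) E hsymm hE
  rwa [hnorm s hs.le, hE1, one_pow, mul_one,
    iteratedFDeriv_two_smul_apply_eq_deriv_deriv hΦ hray] at hlower

theorem mul_rpow_mul_le_deriv (hF : IsPPotential n p γ₁ γ₂ F) {E : Fin n → Fin n → ℝ}
    (hE : IsSymmMat E) (hE1 : frobNorm E = 1) {t : ℝ} (ht : 0 < t) :
    γ₁ * (min 1 (4 ^ (-((p - 2) / 2))) * (1 + t ^ 2) ^ ((p - 2) / 2)) * (t / 2) ≤
      deriv F t := by
  have hD : Icc (t / 2) t ⊆ Ioi 0 := fun x hx => show 0 < x by linarith [hx.1]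
  have hF'' : ∀ ξ ∈ interior (Icc (t / 2) t),
      γ₁ * (min 1 (4 ^ (-((p - 2) / 2))) * (1 + t ^ 2) ^ ((p - 2) / 2)) ≤ deriv (deriv F) ξ := by
    intro ξ hξ
    rw [interior_Icc] at hξ
    have hξ0 : 0 < ξ := by linarith [hξ.1]
    refine le_trans ?_ (hF.le_deriv_deriv hE hE1 hξ0)
    gcongr
    · exact hF.gamma₁_pos.le
    · exact min_one_rpow_neg_mul_rpow_le (by positivity) (by nlinarith [hξ.2]) (by norm_num)
        (by nlinarith [hξ.1])
  have hgrowth := (convex_Icc (t / 2) t).mul_sub_le_image_sub_of_le_deriv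
    (hF.contDiffOn_deriv.continuousOn.mono hD)
    ((hF.contDiffOn_deriv.differentiableOn one_ne_zero).mono (interior_subset.trans hD))
    hF'' (t / 2) (left_mem_Icc.2 (by linarith)) t (right_mem_Icc.2 (by linarith)) (by linarith)
  linarith [hF.deriv_nonneg (half_pos ht)]

end IsPPotential

theorem stress_coercivity_general (n : ℕ) (p : ℝ) :
    ∃ c₁ : ℝ, 0 < c₁ ∧ ∀ (γ₁ γ₂ : ℝ) (F : ℝ → ℝ), IsPPotential n p γ₁ γ₂ F →
      ∀ B : Fin n → Fin n → ℝ, IsSymmMat B →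
        c₁ * γ₁ * (1 + frobNorm B ^ 2) ^ ((p - 2) / 2) * frobNorm B ^ 2 ≤
          frobInner (stress F B) B := by
  refine ⟨min 1 (4 ^ (-((p - 2) / 2))) / 2, by positivity, fun γ₁ γ₂ F hF B hB => ?_⟩
  rw [frobInner_stress_self]
  rcases eq_or_ne B 0 with rfl | hB0
  · simp
  set t := frobNorm B
  have ht : 0 < t := frobNorm_pos hB0
  have hE : IsSymmMat (t⁻¹ • B) := fun i j => by simp only [Pi.smul_apply, hB i j]
  have hE1 : frobNorm (t⁻¹ • B) = 1 := by rw [frobNorm_smul (by positivity), inv_mul_cancel₀ ht.ne']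
  have hderiv := hF.mul_rpow_mul_le_deriv hE hE1 ht
  calc min 1 (4 ^ (-((p - 2) / 2))) / 2 * γ₁ * (1 + t ^ 2) ^ ((p - 2) / 2) * t ^ 2
      = γ₁ * (min 1 (4 ^ (-((p - 2) / 2))) * (1 + t ^ 2) ^ ((p - 2) / 2)) * (t / 2) * t := by ring
    _ ≤ deriv F t * t := by gcongr

/-- Coercivity of the extra stress: there is `c₁ > 0` depending only on `n` and `p`
(independent of `γ₁, γ₂`) such that for every `p`-potential `F` and every symmetric `B`,
`S(B) : B ≥ c₁ γ₁ (1 + |B|²)^((p-2)/2) |B|²`. -/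
theorem stress_coercivity (n : ℕ) (hn : 1 ≤ n) (p : ℝ) (hp : 1 < p) :
    ∃ c₁ : ℝ, 0 < c₁ ∧ ∀ (γ₁ γ₂ : ℝ) (F : ℝ → ℝ), IsPPotential n p γ₁ γ₂ F →
      ∀ B : Fin n → Fin n → ℝ, IsSymmMat B →
        c₁ * γ₁ * (1 + frobNorm B ^ 2) ^ ((p - 2) / 2) * frobNorm B ^ 2 ≤
          frobInner (stress F B) B :=
  stress_coercivity_general n p
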